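/- arXiv:1804.05153 — 5 statements merged into one kernel-verified Lean document; each statement's English description precedes it below -/
import Mathlib

section
/- The Hamiltonian H satisfies on 𝒳 the pointwise identity ℒH(q,p,ξ) = −ξ·kN/β − γ·Σᵢ |pᵢ|²/mᵢ² + (γk/β)·Σᵢ 1/mᵢ. Consequently, there exist constants α, K > 0 such that ℒH(q,p,ξ) ≤ α·H(q,p,ξ) + K for all (q,p,ξ) ∈ 𝒳. -/
open scoped BigOperators ENNReal Topology
open MeasureTheory Filter Set

noncomputable section

/-- Configuration space of `N` particles in `ℝ^k`. -/
abbrev Qs (N k : ℕ) : Type := Fin N → Fin k → ℝ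

/-- Full state space `(q, p, ξ)`. -/
abbrev Xs (N k : ℕ) : Type := Qs N k × Qs N k × ℝ

/-- Standard basis vector in the `qᵢℓ` direction. -/
def eQ (N k : ℕ) (i : Fin N) (l : Fin k) : Xs N k := (Pi.single i (Pi.single l 1), 0, 0)

/-- Standard basis vector in the `pᵢℓ` direction. -/
def eP (N k : ℕ) (i : Fin N) (l : Fin k) : Xs N k := (0, Pi.single i (Pi.single l 1), 0)

/-- Standard basis vector in the `ξ` direction. -/
def eXi (N k : ℕ) : Xs N k := (0, 0, 1)

/-- Directional (partial) derivative of `φ` at `x` in direction `v`. -/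
def pd {N k : ℕ} (φ : Xs N k → ℝ) (x v : Xs N k) : ℝ := fderiv ℝ φ x v

/-- Second directional derivative of `φ` at `x` in directions `v`, `w`. -/
def pd2 {N k : ℕ} (φ : Xs N k → ℝ) (x v w : Xs N k) : ℝ :=
  fderiv ℝ (fun y => fderiv ℝ φ y v) x w

/-- Kinetic norm squared `‖p‖_m² = ∑ᵢ |pᵢ|²/mᵢ`. -/
def kinSq {N k : ℕ} (m : Fin N → ℝ) (p : Qs N k) : ℝ := ∑ i, (∑ l, (p i l) ^ 2) / m i

/-- Euclidean norm squared `|p|² = ∑ᵢ |pᵢ|²`. -/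
def eucSq {N k : ℕ} (p : Qs N k) : ℝ := ∑ i, ∑ l, (p i l) ^ 2

/-- Gradient of `U : (ℝ^k)^N → ℝ`, componentwise. -/
def gradU {N k : ℕ} (U : Qs N k → ℝ) (q : Qs N k) : Qs N k :=
  fun i l => fderiv ℝ U q (Pi.single i (Pi.single l 1))

/-- `|∇U(q)|²` (Euclidean). -/
def gradSq {N k : ℕ} (U : Qs N k → ℝ) (q : Qs N k) : ℝ := eucSq (gradU U q)

/-- Frobenius norm squared `|∇²U(q)|²` of the Hessian of `U`. -/
def hessSq {N k : ℕ} (U : Qs N k → ℝ) (q : Qs N k) : ℝ :=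
  ∑ i, ∑ l, eucSq (gradU (fun q' => gradU U q' i l) q)

/-- Hamiltonian `H(q,p,ξ) = ½‖p‖_m² + U(q) + aξ²/2`. -/
def Ham {N k : ℕ} (m : Fin N → ℝ) (a : ℝ) (U : Qs N k → ℝ) (x : Xs N k) : ℝ :=
  kinSq m x.2.1 / 2 + U x.1 + a * x.2.2 ^ 2 / 2

/-- The generator `ℒ` of the Nosé–Hoover equation under Brownian heating. -/
def gen {N k : ℕ} (m : Fin N → ℝ) (γ a β : ℝ) (U : Qs N k → ℝ) (φ : Xs N k → ℝ)
    (x : Xs N k) : ℝ :=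
  (∑ i, ∑ l, x.2.1 i l / m i * pd φ x (eQ N k i l))
    - (∑ i, ∑ l, (x.2.2 + γ / m i) * x.2.1 i l * pd φ x (eP N k i l))
    - (∑ i, ∑ l, gradU U x.1 i l * pd φ x (eP N k i l))
    + a⁻¹ * (kinSq m x.2.1 - (k * N : ℝ) / β) * pd φ x (eXi N k)
    + γ / β * ∑ i, ∑ l, pd2 φ x (eP N k i l) (eP N k i l)

/-- `|∇_p φ|²`, the squared Euclidean norm of the gradient in the momentum variables. -/
def gradPSq {N k : ℕ} (φ : Xs N k → ℝ) (x : Xs N k) : ℝ :=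
  ∑ i, ∑ l, (pd φ x (eP N k i l)) ^ 2

/-- Dawson's integral `D(z) = exp(−z²)·∫₀^z exp(y²) dy`. -/
def dawson (z : ℝ) : ℝ := Real.exp (-z ^ 2) * ∫ y in (0:ℝ)..z, Real.exp (y ^ 2)

/-- The maximum `D_max` of Dawson's integral. -/
def Dmax : ℝ := ⨆ z : ℝ, dawson z

/-- Real-valued version of an extended-real-valued potential. -/
def Ur {N k : ℕ} (U : Qs N k → ℝ≥0∞) (q : Qs N k) : ℝ := (U q).toReal

/-- The finiteness domain `𝒪 = {q : U(q) < ∞}`. -/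
def Oset {N k : ℕ} (U : Qs N k → ℝ≥0∞) : Set (Qs N k) := {q | U q ≠ ⊤}

/-- The state space `𝒳 = 𝒪 × (ℝ^k)^N × ℝ`, as a subset of the ambient product. -/
def Xset {N k : ℕ} (U : Qs N k → ℝ≥0∞) : Set (Xs N k) := {x | U x.1 ≠ ⊤}

/-- A *normal* potential `U : (ℝ^k)^N → [0,+∞]`: conditions (A1)–(A4). -/
structure IsNormalPotential (N k : ℕ) (β : ℝ) (U : Qs N k → ℝ≥0∞) : Prop where
  /-- (A1): `𝒪` is non-empty. -/
  nonempty : (Oset U).Nonempty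
  /-- (A1): `𝒪` is open. -/
  isOpen : IsOpen (Oset U)
  /-- (A1): `𝒪` is connected. -/
  isConnected : IsConnected (Oset U)
  /-- (A2): every sublevel set `𝒪ₙ = {U < n}` has compact closure. -/
  compact_closure_sublevel : ∀ n : ℕ, IsCompact (closure {q | U q < (n : ℝ≥0∞)})
  /-- (A3): `U` is smooth on `𝒪`. -/
  smooth : ContDiffOn ℝ (⊤ : ℕ∞) (Ur U) (Oset U)
  /-- (A3): `∫_𝒪 exp(−βU) < ∞`. -/
  integrable : IntegrableOn (fun q => Real.exp (-β * Ur U q)) (Oset U)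
  /-- (A4): blow-up of the gradient and Hessian-to-gradient ratio. -/
  grad_blowup : ∃ ζ ∈ Set.Ioo (1 : ℝ) 2, ∀ z : ℕ → Qs N k,
      Tendsto (fun n => U (z n)) atTop (𝓝 ⊤) →
      Tendsto (fun n => Real.sqrt (gradSq (Ur U) (z n))) atTop atTop ∧
      Tendsto (fun n => Real.sqrt (hessSq (Ur U) (z n)) / Real.sqrt (gradSq (Ur U) (z n)) ^ ζ)
        atTop (𝓝 0)


/-- evaluation of p-component -/
def evP' (N k : ℕ) (i : Fin N) (l : Fin k) : Xs N k →L[ℝ] ℝ :=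
  (ContinuousLinearMap.proj l).comp ((ContinuousLinearMap.proj i).comp
    ((ContinuousLinearMap.fst ℝ (Qs N k) ℝ).comp (ContinuousLinearMap.snd ℝ (Qs N k) (Qs N k × ℝ))))

def evXi' (N k : ℕ) : Xs N k →L[ℝ] ℝ :=
  (ContinuousLinearMap.snd ℝ (Qs N k) ℝ).comp (ContinuousLinearMap.snd ℝ (Qs N k) (Qs N k × ℝ))

@[simp] lemma evP'_apply (N k : ℕ) (i : Fin N) (l : Fin k) (v : Xs N k) :
    evP' N k i l v = v.2.1 i l := rfl

@[simp] lemma evXi'_apply (N k : ℕ) (v : Xs N k) : evXi' N k v = v.2.2 := rfl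

lemma sum_single_mul {N k : ℕ} (c : Fin N → Fin k → ℝ) (i : Fin N) (l : Fin k) :
    ∑ i', ∑ l', c i' l' * (Pi.single i (Pi.single l (1:ℝ)) : Qs N k) i' l' = c i l := by
  simp [Pi.single_apply, ite_apply, Finset.sum_ite_eq, mul_ite]

lemma hasFDerivAt_kin {N k : ℕ} (m : Fin N → ℝ) (x : Xs N k) :
    HasFDerivAt (fun y : Xs N k => kinSq m y.2.1 / 2)
      (∑ i, ∑ l, ((x.2.1 i l / m i) • evP' N k i l)) x := by
  have h1 : ∀ (i : Fin N) (l : Fin k),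
      HasFDerivAt (fun y : Xs N k => (m i * 2)⁻¹ * (y.2.1 i l * y.2.1 i l))
        ((x.2.1 i l / m i) • evP' N k i l) x := by
    intro i l
    have := (((evP' N k i l).hasFDerivAt (x := x)).mul
      ((evP' N k i l).hasFDerivAt (x := x))).const_mul ((m i * 2)⁻¹)
    refine this.congr_fderiv ?_
    refine ContinuousLinearMap.ext fun v => ?_
    simp only [ContinuousLinearMap.smul_apply, ContinuousLinearMap.add_apply,
      evP'_apply, smul_eq_mul]
    ring
  have h2 := HasFDerivAt.fun_sum (fun i (_ : i ∈ Finset.univ) =>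
    HasFDerivAt.fun_sum (fun l (_ : l ∈ Finset.univ) => h1 i l))
  refine h2.congr_of_eventuallyEq (Filter.Eventually.of_forall fun y => ?_)
  simp only [kinSq]
  rw [Finset.sum_div]
  refine Finset.sum_congr rfl fun i _ => ?_
  rw [Finset.sum_div, Finset.sum_div]
  refine Finset.sum_congr rfl fun l _ => ?_
  rw [div_div, sq, div_eq_inv_mul]

lemma hasFDerivAt_Ham {N k : ℕ} (m : Fin N → ℝ) (a : ℝ)
    (O : Set (Qs N k)) (hOopen : IsOpen O) (U : Qs N k → ℝ) (hU : ContDiffOn ℝ 2 U O)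
    (x : Xs N k) (hx : x.1 ∈ O) :
    HasFDerivAt (Ham m a U)
      ((∑ i, ∑ l, ((x.2.1 i l / m i) • evP' N k i l))
        + (fderiv ℝ U x.1).comp (ContinuousLinearMap.fst ℝ (Qs N k) (Qs N k × ℝ))
        + (a * x.2.2) • evXi' N k) x := by
  have hdU : DifferentiableAt ℝ U x.1 :=
    (hU.differentiableOn (by norm_num)).differentiableAt (hOopen.mem_nhds hx)
  have hU' : HasFDerivAt (fun y : Xs N k => U y.1)
      ((fderiv ℝ U x.1).comp (ContinuousLinearMap.fst ℝ (Qs N k) (Qs N k × ℝ))) x :=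
    hdU.hasFDerivAt.comp x (hasFDerivAt_fst)
  have hXi : HasFDerivAt (fun y : Xs N k => a * y.2.2 ^ 2 / 2) ((a * x.2.2) • evXi' N k) x := by
    have := (((evXi' N k).hasFDerivAt (x := x)).mul
      ((evXi' N k).hasFDerivAt (x := x))).const_mul (a / 2)
    refine (this.congr_of_eventuallyEq (Filter.Eventually.of_forall fun y => ?_)).congr_fderiv ?_
    · simp only [evXi'_apply, Pi.mul_apply]
      ring
    · refine ContinuousLinearMap.ext fun v => ?_
      simp only [ContinuousLinearMap.smul_apply, ContinuousLinearMap.add_apply,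
        evXi'_apply, smul_eq_mul]
      ring
  exact ((hasFDerivAt_kin m x).add hU').add hXi

section PD

variable {N k : ℕ} (m : Fin N → ℝ) (a : ℝ)
    (O : Set (Qs N k)) (hOopen : IsOpen O) (U : Qs N k → ℝ) (hU : ContDiffOn ℝ 2 U O)
    (x : Xs N k) (hx : x.1 ∈ O)

include hOopen hU hx

lemma pd_Ham_eQ (i : Fin N) (l : Fin k) :
    pd (Ham m a U) x (eQ N k i l) = gradU U x.1 i l := by
  rw [pd, (hasFDerivAt_Ham m a O hOopen U hU x hx).fderiv]
  simp only [ContinuousLinearMap.add_apply, ContinuousLinearMap.coe_sum',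
    Finset.sum_apply, ContinuousLinearMap.smul_apply, ContinuousLinearMap.comp_apply,
    ContinuousLinearMap.coe_fst', evP'_apply, evXi'_apply, smul_eq_mul, eQ, gradU]
  simp

lemma pd_Ham_eP (i : Fin N) (l : Fin k) :
    pd (Ham m a U) x (eP N k i l) = x.2.1 i l / m i := by
  rw [pd, (hasFDerivAt_Ham m a O hOopen U hU x hx).fderiv]
  simp only [ContinuousLinearMap.add_apply, ContinuousLinearMap.coe_sum',
    Finset.sum_apply, ContinuousLinearMap.smul_apply, ContinuousLinearMap.comp_apply,
    ContinuousLinearMap.coe_fst', evP'_apply, evXi'_apply, smul_eq_mul, eP]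
  rw [map_zero]
  simpa using sum_single_mul (fun i' l' => x.2.1 i' l' / m i') i l

lemma pd_Ham_eXi :
    pd (Ham m a U) x (eXi N k) = a * x.2.2 := by
  rw [pd, (hasFDerivAt_Ham m a O hOopen U hU x hx).fderiv]
  simp only [ContinuousLinearMap.add_apply, ContinuousLinearMap.coe_sum',
    Finset.sum_apply, ContinuousLinearMap.smul_apply, ContinuousLinearMap.comp_apply,
    ContinuousLinearMap.coe_fst', evP'_apply, evXi'_apply, smul_eq_mul, eXi]
  simp [map_zero]

lemma pd2_Ham_eP (i : Fin N) (l : Fin k) :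
    pd2 (Ham m a U) x (eP N k i l) (eP N k i l) = (m i)⁻¹ := by
  have hXopen : IsOpen {y : Xs N k | y.1 ∈ O} := hOopen.preimage continuous_fst
  have hev : (fun y : Xs N k => fderiv ℝ (Ham m a U) y (eP N k i l))
      =ᶠ[nhds x] (fun y : Xs N k => (m i)⁻¹ * y.2.1 i l) := by
    filter_upwards [hXopen.mem_nhds hx] with y hy
    rw [show fderiv ℝ (Ham m a U) y (eP N k i l) = pd (Ham m a U) y (eP N k i l) from rfl,
      pd_Ham_eP m a O hOopen U hU y hy i l, div_eq_inv_mul]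
  have hg : HasFDerivAt (fun y : Xs N k => (m i)⁻¹ * y.2.1 i l)
      ((m i)⁻¹ • evP' N k i l) x := ((evP' N k i l).hasFDerivAt (x := x)).const_mul _
  rw [pd2, hev.fderiv_eq, hg.fderiv]
  simp [eP, Pi.single_apply]

end PD

/-- equation `eqn:primitive`: the pointwise identity for `ℒH` and the
consequent linear bound `ℒH ≤ αH + K`. -/
theorem gen_hamiltonian
    (N k : ℕ) (hN : 1 ≤ N) (hk : 1 ≤ k)
    (m : Fin N → ℝ) (hm : ∀ i, 0 < m i)
    (γ a T kB : ℝ) (hγ : 0 < γ) (ha : 0 < a) (hT : 0 < T) (hkB : 0 < kB)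
    (β : ℝ) (hβ : β = (kB * T)⁻¹)
    (O : Set (Qs N k)) (hOne : O.Nonempty) (hOopen : IsOpen O)
    (U : Qs N k → ℝ) (hUnonneg : ∀ q ∈ O, 0 ≤ U q) (hU : ContDiffOn ℝ 2 U O) :
    (∀ x ∈ {x : Xs N k | x.1 ∈ O},
      gen m γ a β U (Ham m a U) x
        = -x.2.2 * (k * N : ℝ) / β - γ * (∑ i, (∑ l, (x.2.1 i l) ^ 2) / (m i) ^ 2)
            + γ * k / β * ∑ i, 1 / m i) ∧
    ∃ α K : ℝ, 0 < α ∧ 0 < K ∧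
      ∀ x ∈ {x : Xs N k | x.1 ∈ O},
        gen m γ a β U (Ham m a U) x ≤ α * Ham m a U x + K := by
  have hβpos : 0 < β := by rw [hβ]; positivity
  have hm0 : ∀ i, m i ≠ 0 := fun i => (hm i).ne'
  have main : ∀ x ∈ {x : Xs N k | x.1 ∈ O},
      gen m γ a β U (Ham m a U) x
        = -x.2.2 * (k * N : ℝ) / β - γ * (∑ i, (∑ l, (x.2.1 i l) ^ 2) / (m i) ^ 2)
            + γ * k / β * ∑ i, 1 / m i := by
    intro x hx
    replace hx : x.1 ∈ O := hx
    rw [gen]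
    simp only [pd_Ham_eQ m a O hOopen U hU x hx, pd_Ham_eP m a O hOopen U hU x hx,
      pd_Ham_eXi m a O hOopen U hU x hx, pd2_Ham_eP m a O hOopen U hU x hx]
    have e1 : ∑ i, ∑ l, x.2.1 i l / m i * gradU U x.1 i l
        = ∑ i, ∑ l, gradU U x.1 i l * (x.2.1 i l / m i) :=
      Finset.sum_congr rfl fun i _ => Finset.sum_congr rfl fun l _ => mul_comm _ _
    have e2 : ∑ i, ∑ l, (x.2.2 + γ / m i) * x.2.1 i l * (x.2.1 i l / m i)
        = x.2.2 * kinSq m x.2.1 + γ * ∑ i, (∑ l, (x.2.1 i l) ^ 2) / (m i) ^ 2 := by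
      have h1 : ∀ i : Fin N, ∑ l, (x.2.2 + γ / m i) * x.2.1 i l * (x.2.1 i l / m i)
          = x.2.2 * ((∑ l, (x.2.1 i l) ^ 2) / m i)
            + γ * ((∑ l, (x.2.1 i l) ^ 2) / (m i) ^ 2) := by
        intro i
        rw [Finset.sum_div, Finset.mul_sum, Finset.sum_div, Finset.mul_sum,
          ← Finset.sum_add_distrib]
        refine Finset.sum_congr rfl fun l _ => ?_
        ring
      rw [Finset.sum_congr rfl fun i _ => h1 i, Finset.sum_add_distrib,
        ← Finset.mul_sum, ← Finset.mul_sum, kinSq]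
    have e3 : (γ / β) * ∑ i : Fin N, ∑ _l : Fin k, (m i)⁻¹
        = γ * k / β * ∑ i, 1 / m i := by
      simp only [Finset.sum_const, Finset.card_univ, Fintype.card_fin, nsmul_eq_mul,
        one_div, Finset.mul_sum]
      refine Finset.sum_congr rfl fun i _ => ?_
      ring
    have e4 : a⁻¹ * (kinSq m x.2.1 - (k * N : ℝ) / β) * (a * x.2.2)
        = x.2.2 * kinSq m x.2.1 - x.2.2 * (k * N : ℝ) / β := by
      field_simp
    rw [e1, e2, e3, e4]
    ring
  refine ⟨main, 1, γ * k / β * (∑ i, 1 / m i) + ((k * N : ℝ) / β) ^ 2 / (2 * a) + 1,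
    one_pos, ?_, ?_⟩
  · have h1 : 0 ≤ γ * k / β * ∑ i, 1 / m i := by
      apply mul_nonneg
      · exact div_nonneg (mul_nonneg hγ.le (Nat.cast_nonneg k)) hβpos.le
      · exact Finset.sum_nonneg fun i _ => le_of_lt (by rw [one_div]; exact inv_pos.2 (hm i))
    have h2 : 0 ≤ ((k * N : ℝ) / β) ^ 2 / (2 * a) := div_nonneg (sq_nonneg _) (by linarith)
    linarith
  · intro x hx
    replace hx : x.1 ∈ O := hx
    rw [main x hx]
    have hS : 0 ≤ ∑ i, (∑ l, (x.2.1 i l) ^ 2) / (m i) ^ 2 :=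
      Finset.sum_nonneg fun i _ =>
        div_nonneg (Finset.sum_nonneg fun l _ => sq_nonneg _) (sq_nonneg _)
    have hkin : 0 ≤ kinSq m x.2.1 :=
      Finset.sum_nonneg fun i _ =>
        div_nonneg (Finset.sum_nonneg fun l _ => sq_nonneg _) (hm i).le
    have hU0 : 0 ≤ U x.1 := hUnonneg _ hx
    have hHam : a * x.2.2 ^ 2 / 2 ≤ Ham m a U x := by
      rw [Ham]; linarith
    have hc : 0 ≤ (a * x.2.2 + (k * N : ℝ) / β) ^ 2 / (2 * a) :=
      div_nonneg (sq_nonneg _) (by linarith)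
    have hc2 : (a * x.2.2 + (k * N : ℝ) / β) ^ 2 / (2 * a)
        = a * x.2.2 ^ 2 / 2 + x.2.2 * ((k * N : ℝ) / β)
          + ((k * N : ℝ) / β) ^ 2 / (2 * a) := by
      field_simp
      ring
    have hkey : -x.2.2 * (k * N : ℝ) / β
        ≤ a * x.2.2 ^ 2 / 2 + ((k * N : ℝ) / β) ^ 2 / (2 * a) := by
      have : -x.2.2 * (k * N : ℝ) / β = -(x.2.2 * ((k * N : ℝ) / β)) := by ring
      rw [this]
      linarith [hc, hc2.symm.le]
    have hγS : 0 ≤ γ * ∑ i, (∑ l, (x.2.1 i l) ^ 2) / (m i) ^ 2 :=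
      mul_nonneg hγ.le hS
    linarith
end
end

section
/- The density ρ(q,p,ξ) = exp(−β·H(q,p,ξ)) satisfies the stationary Fokker–Planck (formal adjoint) equation on 𝒳: −Σᵢ ∇_{qᵢ}·( (pᵢ/mᵢ) ρ ) + Σᵢ ∇_{pᵢ}·( ( (ξ + γ/mᵢ) pᵢ + ∇_{qᵢ}U ) ρ ) − ∂_ξ( a⁻¹(‖p‖_m² − kN/β) ρ ) + (γ/β) Δ_p ρ = 0 at every point of 𝒳. -/
open scoped BigOperators ENNReal Topology
open MeasureTheory Filter Set

noncomputable section

namespace GibbsAux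

/-- Projection onto the `q` component. -/
def prQ (N k : ℕ) : Xs N k →L[ℝ] Qs N k := ContinuousLinearMap.fst ℝ _ _

/-- Projection onto the `p` component. -/
def prP (N k : ℕ) : Xs N k →L[ℝ] Qs N k :=
  (ContinuousLinearMap.fst ℝ _ _).comp (ContinuousLinearMap.snd ℝ (Qs N k) _)

/-- Projection onto the `ξ` component. -/
def prXi (N k : ℕ) : Xs N k →L[ℝ] ℝ :=
  (ContinuousLinearMap.snd ℝ _ _).comp (ContinuousLinearMap.snd ℝ (Qs N k) _)

@[simp] lemma prQ_apply {N k : ℕ} (v : Xs N k) : prQ N k v = v.1 := rfl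
@[simp] lemma prP_apply {N k : ℕ} (v : Xs N k) : prP N k v = v.2.1 := rfl
@[simp] lemma prXi_apply {N k : ℕ} (v : Xs N k) : prXi N k v = v.2.2 := rfl

/-- Evaluation of a `q`-type vector at coordinates `(i, l)`. -/
def evQ (N k : ℕ) (i : Fin N) (l : Fin k) : Qs N k →L[ℝ] ℝ :=
  (ContinuousLinearMap.proj l : (Fin k → ℝ) →L[ℝ] ℝ).comp
    (ContinuousLinearMap.proj i : (Fin N → Fin k → ℝ) →L[ℝ] (Fin k → ℝ))

@[simp] lemma evQ_apply {N k : ℕ} (i : Fin N) (l : Fin k) (q : Qs N k) :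
    evQ N k i l q = q i l := rfl

/-- Evaluation of the `p` component at coordinates `(i, l)`. -/
def evP (N k : ℕ) (i : Fin N) (l : Fin k) : Xs N k →L[ℝ] ℝ :=
  (evQ N k i l).comp (prP N k)

@[simp] lemma evP_apply {N k : ℕ} (i : Fin N) (l : Fin k) (v : Xs N k) :
    evP N k i l v = v.2.1 i l := rfl

/-- The derivative of `kinSq m` at `p`. -/
def dK {N k : ℕ} (m : Fin N → ℝ) (p : Qs N k) : Qs N k →L[ℝ] ℝ :=
  ∑ i, ∑ l, (2 * p i l / m i) • evQ N k i l

lemma dK_apply {N k : ℕ} (m : Fin N → ℝ) (p v : Qs N k) :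
    dK m p v = ∑ i, ∑ l, 2 * p i l / m i * v i l := by
  simp [dK]

lemma dK_single {N k : ℕ} (m : Fin N → ℝ) (p : Qs N k) (i : Fin N) (l : Fin k) :
    dK m p (Pi.single i (Pi.single l 1)) = 2 * p i l / m i := by
  rw [dK_apply]
  rw [Finset.sum_eq_single i]
  · rw [Finset.sum_eq_single l]
    · simp
    · intro b _ hb; simp [Pi.single_apply, hb]
    · simp
  · intro b _ hb; simp [Pi.single_apply, hb]
  · simp

lemma hasFDerivAt_kinSq {N k : ℕ} (m : Fin N → ℝ) (p : Qs N k) :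
    HasFDerivAt (kinSq m) (dK m p) p := by
  have hfun : kinSq m = fun q : Qs N k => ∑ i, ∑ l, (q i l) ^ 2 / m i := by
    funext q
    exact Finset.sum_congr rfl fun i _ => Finset.sum_div _ _ _
  rw [hfun, show dK m p = ∑ i, ∑ l, (2 * p i l / m i) • evQ N k i l from rfl]
  apply HasFDerivAt.fun_sum
  intro i _
  apply HasFDerivAt.fun_sum
  intro l _
  have h1 : HasFDerivAt (fun q : Qs N k => q i l) (evQ N k i l) p :=
    (evQ N k i l).hasFDerivAt
  have h2 := (h1.fun_mul h1).const_mul (m i)⁻¹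
  have h3 : (fun q : Qs N k => q i l ^ 2 / m i) = fun q : Qs N k => (m i)⁻¹ * (q i l * q i l) := by
    funext q; ring
  rw [h3]
  have hD : (m i)⁻¹ • (p i l • evQ N k i l + p i l • evQ N k i l)
      = (2 * p i l / m i) • evQ N k i l :=
    ContinuousLinearMap.ext fun v => by simp; ring
  exact hD ▸ h2

lemma hasFDerivAt_Ham {N k : ℕ} (m : Fin N → ℝ) (a : ℝ) (U : Qs N k → ℝ) (y : Xs N k)
    (hU : DifferentiableAt ℝ U y.1) :
    HasFDerivAt (Ham m a U)
      ((2:ℝ)⁻¹ • ((dK m y.2.1).comp (prP N k)) + (fderiv ℝ U y.1).comp (prQ N k)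
        + (a * y.2.2) • prXi N k) y := by
  have h1 : HasFDerivAt (fun z : Xs N k => kinSq m z.2.1 / 2)
      ((2:ℝ)⁻¹ • ((dK m y.2.1).comp (prP N k))) y := by
    have h0 := ((hasFDerivAt_kinSq m y.2.1).comp y (prP N k).hasFDerivAt).const_mul (2:ℝ)⁻¹
    have heq : (fun z : Xs N k => kinSq m z.2.1 / 2)
        = fun z : Xs N k => (2:ℝ)⁻¹ * kinSq m (prP N k z) := by
      funext z; simp; ring
    rw [heq]
    exact h0
  have h2 : HasFDerivAt (fun z : Xs N k => U z.1) ((fderiv ℝ U y.1).comp (prQ N k)) y :=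
    hU.hasFDerivAt.comp y (prQ N k).hasFDerivAt
  have h3 : HasFDerivAt (fun z : Xs N k => a * z.2.2 ^ 2 / 2) ((a * y.2.2) • prXi N k) y := by
    have hx : HasFDerivAt (fun z : Xs N k => z.2.2) (prXi N k) y := (prXi N k).hasFDerivAt
    have h4 := (hx.mul hx).const_mul (a / 2)
    have heq : (fun z : Xs N k => a * z.2.2 ^ 2 / 2)
        = fun z : Xs N k => (a / 2) * (z.2.2 * z.2.2) := by
      funext z; ring
    rw [heq]
    have hD : (a / 2) • (y.2.2 • prXi N k + y.2.2 • prXi N k) = (a * y.2.2) • prXi N k :=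
      ContinuousLinearMap.ext fun v => by simp; ring
    exact hD ▸ h4
  exact (h1.add h2).add h3

lemma combine_sums {N k : ℕ} (f g h e : Fin N → Fin k → ℝ) (q c : ℝ)
    (hper : ∀ i l, -(f i l) + g i l + q * h i l = e i l)
    (hsum : (∑ i, ∑ l, e i l) = c) :
    -(∑ i, ∑ l, f i l) + (∑ i, ∑ l, g i l) - c + q * (∑ i, ∑ l, h i l) = 0 := by
  have hinner : ∀ i, -(∑ l, f i l) + (∑ l, g i l) + q * (∑ l, h i l) = ∑ l, e i l := by
    intro i
    rw [Finset.mul_sum, ← Finset.sum_neg_distrib, ← Finset.sum_add_distrib,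
      ← Finset.sum_add_distrib]
    exact Finset.sum_congr rfl fun l _ => hper i l
  have H : -(∑ i, ∑ l, f i l) + (∑ i, ∑ l, g i l) + q * (∑ i, ∑ l, h i l) = c := by
    rw [Finset.mul_sum, ← Finset.sum_neg_distrib, ← Finset.sum_add_distrib,
      ← Finset.sum_add_distrib, ← hsum]
    exact Finset.sum_congr rfl fun i _ => hinner i
  linarith

end GibbsAux

open GibbsAux

set_option maxHeartbeats 1000000 in
/-- the Gibbs density `ρ = exp(−βH)` solves the stationary Fokker–Planck
(formal adjoint) equation `ℒ*ρ = 0` pointwise on `𝒳`. -/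
theorem gibbs_density_stationary
    (N k : ℕ) (hN : 1 ≤ N) (hk : 1 ≤ k)
    (m : Fin N → ℝ) (hm : ∀ i, 0 < m i)
    (γ a T kB : ℝ) (hγ : 0 < γ) (ha : 0 < a) (hT : 0 < T) (hkB : 0 < kB)
    (β : ℝ) (hβ : β = (kB * T)⁻¹)
    (O : Set (Qs N k)) (hOne : O.Nonempty) (hOopen : IsOpen O)
    (U : Qs N k → ℝ) (hUnonneg : ∀ q ∈ O, 0 ≤ U q) (hU : ContDiffOn ℝ 2 U O) :
    ∀ x ∈ {x : Xs N k | x.1 ∈ O},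
      -(∑ i, ∑ l, pd (fun y => y.2.1 i l / m i * Real.exp (-β * Ham m a U y)) x (eQ N k i l))
        + (∑ i, ∑ l, pd (fun y =>
            ((y.2.2 + γ / m i) * y.2.1 i l + gradU U y.1 i l)
              * Real.exp (-β * Ham m a U y)) x (eP N k i l))
        - pd (fun y => a⁻¹ * (kinSq m y.2.1 - (k * N : ℝ) / β)
              * Real.exp (-β * Ham m a U y)) x (eXi N k)
        + γ / β * ∑ i, ∑ l,
            pd2 (fun y => Real.exp (-β * Ham m a U y)) x (eP N k i l) (eP N k i l)
      = 0 := by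
  intro x hx
  have hx1 : x.1 ∈ O := hx
  have hβpos : (0:ℝ) < β := by rw [hβ]; positivity
  have hβne : β ≠ 0 := ne_of_gt hβpos
  have hane : a ≠ 0 := ne_of_gt ha
  -- differentiability facts
  have hUdiff : ∀ q ∈ O, DifferentiableAt ℝ U q := fun q hq =>
    (hU.contDiffAt (hOopen.mem_nhds hq)).differentiableAt (by norm_num)
  have hGdiff : ∀ (i : Fin N) (l : Fin k), DifferentiableAt ℝ (fun q => gradU U q i l) x.1 := by
    intro i l
    have hC1 : ContDiffOn ℝ 1 (fun q => fderiv ℝ U q) O :=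
      hU.fderiv_of_isOpen hOopen (by norm_num)
    have hd : DifferentiableAt ℝ (fun q => fderiv ℝ U q) x.1 :=
      (hC1.contDiffAt (hOopen.mem_nhds hx1)).differentiableAt one_ne_zero
    exact hd.clm_apply (differentiableAt_const _)
  -- derivative of the density ρ = exp(-βH)
  have hρ : ∀ y : Xs N k, y.1 ∈ O →
      HasFDerivAt (fun z => Real.exp (-β * Ham m a U z))
        (Real.exp (-β * Ham m a U y) • ((-β) •
          ((2:ℝ)⁻¹ • ((dK m y.2.1).comp (prP N k)) + (fderiv ℝ U y.1).comp (prQ N k)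
            + (a * y.2.2) • prXi N k))) y :=
    fun y hy => ((hasFDerivAt_Ham m a U y (hUdiff _ hy)).const_mul (-β)).exp
  -- directional derivatives of ρ
  have hρP : ∀ (y : Xs N k), y.1 ∈ O → ∀ (i : Fin N) (l : Fin k),
      fderiv ℝ (fun z => Real.exp (-β * Ham m a U z)) y (eP N k i l)
        = Real.exp (-β * Ham m a U y) * (-β * (y.2.1 i l / m i)) := by
    intro y hy i l
    rw [(hρ y hy).fderiv]
    simp [eP, dK_single]
    try ring
    try tauto
  -- the four building blocks
  have e1 : ∀ (i : Fin N) (l : Fin k),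
      pd (fun y => y.2.1 i l / m i * Real.exp (-β * Ham m a U y)) x (eQ N k i l)
        = x.2.1 i l / m i * (Real.exp (-β * Ham m a U x) * (-β * gradU U x.1 i l)) := by
    intro i l
    have hc : HasFDerivAt (fun y : Xs N k => y.2.1 i l / m i) ((m i)⁻¹ • evP N k i l) x := by
      have h := ((evP N k i l).hasFDerivAt (x := x)).const_mul (m i)⁻¹
      have heq : (fun y : Xs N k => y.2.1 i l / m i)
          = fun y : Xs N k => (m i)⁻¹ * evP N k i l y := by
        funext y; simp [div_eq_mul_inv, mul_comm]
      rw [heq]; exact h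
    have h2 := hc.fun_mul (hρ x hx1)
    show fderiv ℝ _ x _ = _
    rw [h2.fderiv]
    simp [eQ, gradU, dK_single]
    try ring
    try tauto
  have e2 : ∀ (i : Fin N) (l : Fin k),
      pd (fun y => ((y.2.2 + γ / m i) * y.2.1 i l + gradU U y.1 i l)
          * Real.exp (-β * Ham m a U y)) x (eP N k i l)
        = ((x.2.2 + γ / m i) * x.2.1 i l + gradU U x.1 i l)
            * (Real.exp (-β * Ham m a U x) * (-β * (x.2.1 i l / m i)))
          + Real.exp (-β * Ham m a U x) * (x.2.2 + γ / m i) := by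
    intro i l
    have hc1 : HasFDerivAt (fun y : Xs N k => y.2.2 + γ / m i) (prXi N k) x :=
      (prXi N k).hasFDerivAt.add_const _
    have hc2 : HasFDerivAt (fun y : Xs N k => y.2.1 i l) (evP N k i l) x :=
      (evP N k i l).hasFDerivAt
    have hc3 : HasFDerivAt (fun y : Xs N k => gradU U y.1 i l)
        ((fderiv ℝ (fun q => gradU U q i l) x.1).comp (prQ N k)) x :=
      ((hGdiff i l).hasFDerivAt).comp x (prQ N k).hasFDerivAt
    have hc := ((hc1.fun_mul hc2).fun_add hc3).fun_mul (hρ x hx1)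
    show fderiv ℝ _ x _ = _
    rw [hc.fderiv]
    simp [eP, gradU, dK_single]
    try ring
    try tauto
  have e3 :
      pd (fun y => a⁻¹ * (kinSq m y.2.1 - (k * N : ℝ) / β)
          * Real.exp (-β * Ham m a U y)) x (eXi N k)
        = a⁻¹ * (kinSq m x.2.1 - (k * N : ℝ) / β)
            * (Real.exp (-β * Ham m a U x) * (-β * (a * x.2.2))) := by
    have hc : HasFDerivAt (fun y : Xs N k => a⁻¹ * (kinSq m y.2.1 - (k * N : ℝ) / β))
        (a⁻¹ • ((dK m x.2.1).comp (prP N k))) x := by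
      have h0 := (hasFDerivAt_kinSq m x.2.1).comp x (prP N k).hasFDerivAt
      exact (h0.sub_const ((k * N : ℝ) / β)).const_mul a⁻¹
    have hc2 := hc.fun_mul (hρ x hx1)
    show fderiv ℝ _ x _ = _
    rw [hc2.fderiv]
    simp [eXi, dK_single]
    try ring
    try tauto
  have e4 : ∀ (i : Fin N) (l : Fin k),
      pd2 (fun y => Real.exp (-β * Ham m a U y)) x (eP N k i l) (eP N k i l)
        = -β / m i * (x.2.1 i l * (Real.exp (-β * Ham m a U x) * (-β * (x.2.1 i l / m i)))
            + Real.exp (-β * Ham m a U x) * 1) := by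
    intro i l
    have hEv : (fun y => fderiv ℝ (fun z => Real.exp (-β * Ham m a U z)) y (eP N k i l))
        =ᶠ[𝓝 x] fun y => -β / m i * (y.2.1 i l * Real.exp (-β * Ham m a U y)) := by
      filter_upwards [(hOopen.preimage continuous_fst).mem_nhds
        (show x ∈ Prod.fst ⁻¹' O from hx1)] with y hy
      rw [hρP y hy i l]
      ring
    show fderiv ℝ _ x _ = _
    rw [hEv.fderiv_eq]
    have hc2 : HasFDerivAt (fun y : Xs N k => y.2.1 i l) (evP N k i l) x :=
      (evP N k i l).hasFDerivAt
    have h := (hc2.fun_mul (hρ x hx1)).const_mul (-β / m i)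
    rw [h.fderiv]
    simp [eP, dK_single]
    try ring
    try tauto
  simp only [e1, e2, e3, e4]
  refine combine_sums _ _ _
    (fun i l => x.2.2 * Real.exp (-β * Ham m a U x)
      - β * x.2.2 * Real.exp (-β * Ham m a U x) * ((x.2.1 i l) ^ 2 / m i)) (γ / β) _ ?_ ?_
  · intro i l
    have hmi : m i ≠ 0 := (hm i).ne'
    field_simp
    ring
  · have h1 : ∀ i : Fin N,
        (∑ l, (x.2.2 * Real.exp (-β * Ham m a U x)
          - β * x.2.2 * Real.exp (-β * Ham m a U x) * ((x.2.1 i l) ^ 2 / m i)))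
          = (k : ℝ) * (x.2.2 * Real.exp (-β * Ham m a U x))
            - β * x.2.2 * Real.exp (-β * Ham m a U x) * ((∑ l, (x.2.1 i l) ^ 2) / m i) := by
      intro i
      rw [Finset.sum_sub_distrib, Finset.sum_const, ← Finset.mul_sum, ← Finset.sum_div]
      simp [Finset.card_univ]
    rw [Finset.sum_congr rfl fun i _ => h1 i, Finset.sum_sub_distrib, Finset.sum_const,
      ← Finset.mul_sum]
    have hkin : (∑ i, (∑ l, (x.2.1 i l) ^ 2) / m i) = kinSq m x.2.1 := rfl
    rw [hkin]
    simp only [Finset.card_univ, Fintype.card_fin, nsmul_eq_mul]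
    field_simp
    ring
end
end

section
/- Let f₀ ∈ C^∞(ℝ; [0,1]) satisfy f₀(y) = 1 for y ≤ −1, f₀(y) = 0 for y ≥ 0, f₀' ≤ 0 and |f₀'| ≤ 2. Let δ > 0 and define ψ₀(q,p,ξ) = δ·f₀(ξ)·aξ²/2 on 𝒳. Then on all of 𝒳: (i) |ψ₀| ≤ δ·H; (ii) ℒψ₀(q,p,ξ) ≤ −f₀(ξ)·δ·|ξ|·‖p‖_m² + f₀(ξ)·(δ/β)·kN·|ξ| + (δ/β)·kN; and (iii) ∇_p ψ₀ = 0. -/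
open scoped BigOperators ENNReal Topology
open MeasureTheory Filter Set

noncomputable section

/-- Auxiliary: the `ξ`-coordinate projection as a continuous linear map. -/
def xiL (N k : ℕ) : Xs N k →L[ℝ] ℝ :=
  (ContinuousLinearMap.snd ℝ (Qs N k) ℝ).comp (ContinuousLinearMap.snd ℝ (Qs N k) (Qs N k × ℝ))

lemma fderiv_xi_only {N k : ℕ} (g g' : ℝ → ℝ) (hg : ∀ t, HasDerivAt g (g' t) t)
    (x v : Xs N k) : fderiv ℝ (fun y : Xs N k => g y.2.2) x v = g' x.2.2 * v.2.2 := by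
  have hf : HasFDerivAt (fun y : Xs N k => y.2.2) (xiL N k) x := (xiL N k).hasFDerivAt
  have h : HasFDerivAt (fun y : Xs N k => g y.2.2) (g' x.2.2 • xiL N k) x :=
    (hg x.2.2).comp_hasFDerivAt x hf
  rw [h.fderiv]
  simp [xiL]

/-- the perturbation `ψ₀`: with `ψ₀(q,p,ξ) = δ·f₀(ξ)·aξ²/2` one has
`|ψ₀| ≤ δH`, the generator bound, and `∇_p ψ₀ = 0` on `𝒳`. -/
theorem psi0_estimates
    (N k : ℕ) (hN : 1 ≤ N) (hk : 1 ≤ k)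
    (m : Fin N → ℝ) (hm : ∀ i, 0 < m i)
    (γ a T kB : ℝ) (hγ : 0 < γ) (ha : 0 < a) (hT : 0 < T) (hkB : 0 < kB)
    (β : ℝ) (hβ : β = (kB * T)⁻¹)
    (O : Set (Qs N k)) (hOne : O.Nonempty) (hOopen : IsOpen O)
    (U : Qs N k → ℝ) (hUnonneg : ∀ q ∈ O, 0 ≤ U q) (hU : ContDiffOn ℝ 2 U O)
    (f₀ : ℝ → ℝ) (hf₀smooth : ContDiff ℝ (⊤ : ℕ∞) f₀) (hf₀range : ∀ y, f₀ y ∈ Set.Icc (0:ℝ) 1)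
    (hf₀one : ∀ y : ℝ, y ≤ -1 → f₀ y = 1) (hf₀zero : ∀ y : ℝ, 0 ≤ y → f₀ y = 0)
    (hf₀mono : ∀ y, deriv f₀ y ≤ 0) (hf₀bound : ∀ y, |deriv f₀ y| ≤ 2)
    (δ : ℝ) (hδ : 0 < δ) :
    ∀ x ∈ {x : Xs N k | x.1 ∈ O},
      |δ * f₀ x.2.2 * (a * x.2.2 ^ 2 / 2)| ≤ δ * Ham m a U x ∧
      gen m γ a β U (fun y => δ * f₀ y.2.2 * (a * y.2.2 ^ 2 / 2)) x
        ≤ -(f₀ x.2.2 * δ * |x.2.2| * kinSq m x.2.1)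
            + f₀ x.2.2 * (δ / β) * (k * N : ℝ) * |x.2.2| + δ / β * (k * N : ℝ) ∧
      ∀ (i : Fin N) (l : Fin k),
        pd (fun y => δ * f₀ y.2.2 * (a * y.2.2 ^ 2 / 2)) x (eP N k i l) = 0 := by
  intro x hx
  obtain ⟨q, p, ξ⟩ := x
  simp only [Set.mem_setOf_eq] at hx
  have hβ0 : 0 < β := by rw [hβ]; positivity
  set g : ℝ → ℝ := fun t => δ * f₀ t * (a * t ^ 2 / 2) with hgdef
  set g' : ℝ → ℝ := fun t => δ * deriv f₀ t * (a * t ^ 2 / 2) + δ * f₀ t * (a * t) with hg'def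
  have hgderiv : ∀ t, HasDerivAt g (g' t) t := by
    intro t
    have h1 : HasDerivAt (fun t => δ * f₀ t) (δ * deriv f₀ t) t :=
      ((hf₀smooth.differentiable (by simp) t).hasDerivAt).const_mul δ
    have h2 : HasDerivAt (fun t : ℝ => a * t ^ 2 / 2) (a * t) t := by
      have h := ((hasDerivAt_pow 2 t).const_mul a).div_const 2
      refine h.congr_deriv ?_
      push_cast
      ring
    exact h1.mul h2
  have hpd : ∀ (x v : Xs N k),
      pd (fun y => δ * f₀ y.2.2 * (a * y.2.2 ^ 2 / 2)) x v = g' x.2.2 * v.2.2 := by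
    intro x v
    exact fderiv_xi_only g g' hgderiv x v
  -- partial derivatives in q, p directions vanish
  have hpdQ : ∀ (x : Xs N k) (i : Fin N) (l : Fin k),
      pd (fun y => δ * f₀ y.2.2 * (a * y.2.2 ^ 2 / 2)) x (eQ N k i l) = 0 := by
    intro x i l; rw [hpd]; simp [eQ]
  have hpdP : ∀ (x : Xs N k) (i : Fin N) (l : Fin k),
      pd (fun y => δ * f₀ y.2.2 * (a * y.2.2 ^ 2 / 2)) x (eP N k i l) = 0 := by
    intro x i l; rw [hpd]; simp [eP]
  have hpdXi : ∀ (x : Xs N k),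
      pd (fun y => δ * f₀ y.2.2 * (a * y.2.2 ^ 2 / 2)) x (eXi N k) = g' x.2.2 := by
    intro x; rw [hpd]; simp [eXi]
  have hpd2 : ∀ (x : Xs N k) (i : Fin N) (l : Fin k),
      pd2 (fun y => δ * f₀ y.2.2 * (a * y.2.2 ^ 2 / 2)) x (eP N k i l) (eP N k i l) = 0 := by
    intro x i l
    have hfun : (fun y : Xs N k =>
        fderiv ℝ (fun y => δ * f₀ y.2.2 * (a * y.2.2 ^ 2 / 2)) y (eP N k i l)) =
        fun _ => (0 : ℝ) := by
      funext y
      exact hpdP y i l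
    rw [pd2, hfun]
    simp
  have hK : 0 ≤ kinSq m p := by
    apply Finset.sum_nonneg
    intro i _
    apply div_nonneg (Finset.sum_nonneg fun l _ => sq_nonneg _) (hm i).le
  have hF0 : 0 ≤ f₀ ξ := (hf₀range ξ).1
  have hF1 : f₀ ξ ≤ 1 := (hf₀range ξ).2
  refine ⟨?_, ?_, fun i l => hpdP _ i l⟩
  · -- |ψ₀| ≤ δ H
    have hU0 : 0 ≤ U q := hUnonneg q hx
    have hxi : 0 ≤ a * ξ ^ 2 / 2 := by positivity
    rw [abs_of_nonneg (by positivity)]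
    simp only [Ham]
    nlinarith [mul_le_of_le_one_left hxi hF1]
  · -- generator bound
    set K := kinSq m p with hKdef
    set c : ℝ := (k * N : ℝ) / β with hcdef
    have hc : 0 ≤ c := by positivity
    have hG : gen m γ a β U (fun y => δ * f₀ y.2.2 * (a * y.2.2 ^ 2 / 2)) (q, p, ξ)
        = a⁻¹ * (K - c) * g' ξ := by
      simp only [gen, hpdQ, hpdP, hpdXi, hpd2, mul_zero, Finset.sum_const_zero,
        sub_zero, add_zero, zero_add]
      rfl
    rw [hG]
    have hg'eq : a⁻¹ * (K - c) * g' ξ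
        = (K - c) * (δ * (deriv f₀ ξ * ξ ^ 2 / 2) + δ * (f₀ ξ * ξ)) := by
      simp only [hg'def]
      field_simp
    rw [hg'eq]
    set D := deriv f₀ ξ with hDdef
    set F := f₀ ξ with hFdef
    have hFξ : F * ξ = -(F * |ξ|) := by
      rcases le_or_gt 0 ξ with h | h
      · have : F = 0 := hf₀zero ξ h
        simp [this]
      · rw [abs_of_neg h]; ring
    have hD0 : D ≤ 0 := hf₀mono ξ
    have hs1 : -(D * ξ ^ 2 / 2) ≤ 1 := by
      rcases lt_or_ge ξ (-1) with h | h
      · have hev : f₀ =ᶠ[𝓝 ξ] fun _ => (1 : ℝ) := by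
          filter_upwards [Iio_mem_nhds h] with y hy using hf₀one y (le_of_lt hy)
        have : D = 0 := by rw [hDdef, hev.deriv_eq]; simp
        simp [this]
      · rcases lt_or_ge 0 ξ with h' | h'
        · have hev : f₀ =ᶠ[𝓝 ξ] fun _ => (0 : ℝ) := by
            filter_upwards [Ioi_mem_nhds h'] with y hy using hf₀zero y (le_of_lt hy)
          have : D = 0 := by rw [hDdef, hev.deriv_eq]; simp
          simp [this]
        · have hξ2 : ξ ^ 2 ≤ 1 := by nlinarith
          have hDb : -D ≤ 2 := by
            have := hf₀bound ξ
            rw [abs_le] at this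
            linarith [this.1]
          nlinarith [sq_nonneg ξ]
    have hs0 : D * ξ ^ 2 / 2 ≤ 0 := by nlinarith [sq_nonneg ξ]
    rw [hFξ]
    have hKF : 0 ≤ F * |ξ| := mul_nonneg hF0 (abs_nonneg ξ)
    have e1 : δ * K * (D * ξ ^ 2 / 2) ≤ 0 :=
      mul_nonpos_of_nonneg_of_nonpos (by positivity) hs0
    have e2 : δ * c * (-(D * ξ ^ 2 / 2) - 1) ≤ 0 :=
      mul_nonpos_of_nonneg_of_nonpos (by positivity) (by linarith)
    have hid : -(F * δ * |ξ| * K) + F * (δ / β) * (k * N : ℝ) * |ξ| + δ / β * (k * N : ℝ)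
        = -(F * δ * |ξ| * K) + F * (δ * c) * |ξ| + δ * c := by rw [hcdef]; ring
    have expand : (K - c) * (δ * (D * ξ ^ 2 / 2) + δ * (-(F * |ξ|)))
        = δ * K * (D * ξ ^ 2 / 2) + δ * c * (-(D * ξ ^ 2 / 2) - 1)
          + (-(F * δ * |ξ| * K) + F * (δ * c) * |ξ| + δ * c) := by ring
    rw [hid, expand]
    linarith [e1, e2]
end
end

section
/- Let q, q' ∈ (ℝ^k)^N with q ≠ q', let p, p' ∈ (ℝ^k)^N, let t > 0, and let C ⊆ (ℝ^k)^N be an open convex set containing both q and q'. Then for every v ≥ ‖q − q'‖_m²/t and every ε > 0 there exists a continuous, piecewise continuously differentiable path φ : [0,t] → C with φ(0) = q, φ(t) = q', right derivative p at 0, left derivative p' at t, and | ∫₀^t ‖φ'(u)‖_m² du − v | < ε. -/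
/-!
The path is polygonal. Starting at `q`, move with velocity `p` for time `δ` and come back with
velocity `-p`: this produces the initial velocity. Then go from `q` to `q'` at constant velocity in
time `s ≤ t - 4δ`, rest at `q'`, and end with the mirror excursion `q' → q' - δp' → q'`, which
produces the final velocity. The path stays in `C` because `C` is convex and contains the vertices
(for small `δ`, as `C` is open). The energy is `2δ(‖p‖²_m + ‖p'‖²_m) + ‖q' - q‖²_m / s`; with
`s = min (‖q' - q‖²_m / v) (t - 4δ)` it tends to `v` as `δ → 0`, because `‖q' - q‖²_m / t ≤ v`.
-/

open Set

noncomputable section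

open Filter Topology

def ramp (a b u : ℝ) : ℝ := max a (min u b) - a

section Ramp

variable {a b u : ℝ}

theorem continuous_ramp (a b : ℝ) : Continuous (ramp a b) := by
  unfold ramp; fun_prop

theorem ramp_of_le (h : u ≤ a) : ramp a b u = 0 := by
  simp [ramp, (min_le_left u b).trans h]

theorem ramp_of_ge (hab : a ≤ b) (h : b ≤ u) : ramp a b u = b - a := by
  simp [ramp, h, hab]

theorem ramp_of_mem_Icc (h : u ∈ Icc a b) : ramp a b u = u - a := by
  simp [ramp, h.1, h.2]

end Ramp

theorem exists_mem_Ioo_of_mem_Icc_of_notMem {a : ℕ → ℝ} {n : ℕ} {u : ℝ}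
    (hu : u ∈ Icc (a 0) (a n)) (hknot : u ∉ (Finset.range (n + 1)).image a) :
    ∃ j < n, u ∈ Ioo (a j) (a (j + 1)) := by
  simp only [Finset.mem_image, Finset.mem_range, Nat.lt_succ_iff, not_exists, not_and] at hknot
  have hlt : u < a n := hu.2.lt_of_ne (Ne.symm (hknot n le_rfl))
  have hex : ∃ j, u < a j := ⟨n, hlt⟩
  have hfind_le : Nat.find hex ≤ n := Nat.find_min' hex hlt
  obtain ⟨j, hj⟩ : ∃ j, Nat.find hex = j + 1 :=
    Nat.exists_eq_succ_of_ne_zero fun h => (Nat.find_spec hex).not_ge (h ▸ hu.1)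
  refine ⟨j, by omega, ?_, hj ▸ Nat.find_spec hex⟩
  exact (not_lt.1 (Nat.find_min hex (by omega))).lt_of_ne (hknot j (by omega))

section PolygonalPath

variable {E : Type*} [NormedAddCommGroup E] [NormedSpace ℝ E]

/-- `ramp (a i) (a (i + 1)) u` is the time spent in the piece `[a i, a (i + 1)]` before time `u`,
so the path moves with velocity `w i` during that piece and rests outside `[a 0, a n]`. -/
def polygonalPath (x₀ : E) (a : ℕ → ℝ) (w : ℕ → E) (n : ℕ) (u : ℝ) : E :=
  x₀ + ∑ i ∈ Finset.range n, ramp (a i) (a (i + 1)) u • w i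

variable {x₀ : E} {a : ℕ → ℝ} {w : ℕ → E} {n j : ℕ} {u : ℝ}

theorem continuous_polygonalPath : Continuous (polygonalPath x₀ a w n) :=
  continuous_const.add <|
    continuous_finsetSum _ fun _ _ => (continuous_ramp _ _).smul continuous_const

theorem polygonalPath_knot (ha : Monotone a) (hj : j ≤ n) :
    polygonalPath x₀ a w n (a j) = x₀ + ∑ i ∈ Finset.range j, (a (i + 1) - a i) • w i := by
  rw [polygonalPath, ← Finset.sum_range_add_sum_Ico _ hj, Finset.sum_eq_zero (s := Finset.Ico j n),
    add_zero]
  · refine congrArg _ (Finset.sum_congr rfl fun i hi => ?_)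
    rw [ramp_of_ge (ha i.le_succ) (ha (Finset.mem_range.1 hi))]
  · intro i hi
    rw [ramp_of_le (ha (Finset.mem_Ico.1 hi).1), zero_smul]

theorem polygonalPath_knot_zero (ha : Monotone a) : polygonalPath x₀ a w n (a 0) = x₀ := by
  simpa using polygonalPath_knot (x₀ := x₀) (w := w) ha (Nat.zero_le n)

theorem polygonalPath_eq_of_mem_Icc (ha : Monotone a) (hj : j < n)
    (hu : u ∈ Icc (a j) (a (j + 1))) :
    polygonalPath x₀ a w n u = polygonalPath x₀ a w n (a j) + (u - a j) • w j := by
  have hramp : ∀ i ≠ j, ramp (a i) (a (i + 1)) u = ramp (a i) (a (i + 1)) (a j) := by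
    intro i hij
    rcases lt_or_gt_of_ne hij with h | h
    · rw [ramp_of_ge (ha i.le_succ) ((ha h).trans hu.1), ramp_of_ge (ha i.le_succ) (ha h)]
    · rw [ramp_of_le (hu.2.trans (ha h)), ramp_of_le (ha h.le)]
  rw [← sub_eq_iff_eq_add', polygonalPath, polygonalPath, add_sub_add_left_eq_sub,
    ← Finset.sum_sub_distrib, Finset.sum_eq_single_of_mem j (Finset.mem_range.2 hj)]
  · rw [← sub_smul, ramp_of_mem_Icc hu, ramp_of_mem_Icc ⟨le_rfl, ha j.le_succ⟩, sub_self, sub_zero]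
  · intro i _ hij
    rw [hramp i hij, sub_self]

theorem hasDerivWithinAt_polygonalPath_Icc (ha : Monotone a) (hj : j < n)
    (hu : u ∈ Icc (a j) (a (j + 1))) :
    HasDerivWithinAt (polygonalPath x₀ a w n) (w j) (Icc (a j) (a (j + 1))) u := by
  have hline : HasDerivAt (fun v => polygonalPath x₀ a w n (a j) + (v - a j) • w j) (w j) u := by
    simpa using (((hasDerivAt_id u).sub_const (a j)).smul_const (w j)).const_add
      (polygonalPath x₀ a w n (a j))
  exact hline.hasDerivWithinAt.congr (fun v hv => polygonalPath_eq_of_mem_Icc ha hj hv)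
    (polygonalPath_eq_of_mem_Icc ha hj hu)

theorem hasDerivAt_polygonalPath (ha : Monotone a) (hj : j < n) (hu : u ∈ Ioo (a j) (a (j + 1))) :
    HasDerivAt (polygonalPath x₀ a w n) (w j) u :=
  (hasDerivWithinAt_polygonalPath_Icc ha hj (Ioo_subset_Icc_self hu)).hasDerivAt
    (Icc_mem_nhds hu.1 hu.2)

theorem hasDerivWithinAt_polygonalPath_Ici (ha : Monotone a) (hj : j < n) (hlt : a j < a (j + 1)) :
    HasDerivWithinAt (polygonalPath x₀ a w n) (w j) (Ici (a j)) (a j) :=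
  (hasDerivWithinAt_polygonalPath_Icc ha hj ⟨le_rfl, hlt.le⟩).mono_of_mem_nhdsWithin
    (Icc_mem_nhdsGE hlt)

theorem hasDerivWithinAt_polygonalPath_Iic (ha : Monotone a) (hj : j < n) (hlt : a j < a (j + 1)) :
    HasDerivWithinAt (polygonalPath x₀ a w n) (w j) (Iic (a (j + 1))) (a (j + 1)) :=
  (hasDerivWithinAt_polygonalPath_Icc ha hj ⟨hlt.le, le_rfl⟩).mono_of_mem_nhdsWithin
    (Icc_mem_nhdsLE hlt)

theorem differentiableAt_polygonalPath (ha : Monotone a) (hu : u ∈ Icc (a 0) (a n))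
    (hknot : u ∉ (Finset.range (n + 1)).image a) :
    DifferentiableAt ℝ (polygonalPath x₀ a w n) u :=
  have ⟨_, hj, hu⟩ := exists_mem_Ioo_of_mem_Icc_of_notMem hu hknot
  (hasDerivAt_polygonalPath ha hj hu).differentiableAt

theorem continuousAt_deriv_polygonalPath (ha : Monotone a) (hu : u ∈ Icc (a 0) (a n))
    (hknot : u ∉ (Finset.range (n + 1)).image a) :
    ContinuousAt (deriv (polygonalPath x₀ a w n)) u := by
  obtain ⟨j, hj, hu⟩ := exists_mem_Ioo_of_mem_Icc_of_notMem hu hknot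
  refine Filter.EventuallyEq.continuousAt (y := w j) ?_
  filter_upwards [Ioo_mem_nhds hu.1 hu.2] with v hv using (hasDerivAt_polygonalPath ha hj hv).deriv

theorem integral_comp_deriv_polygonalPath (ha : Monotone a) (Φ : E → ℝ) :
    ∫ u in a 0..a n, Φ (deriv (polygonalPath x₀ a w n) u) =
      ∑ j ∈ Finset.range n, (a (j + 1) - a j) * Φ (w j) := by
  have hpiece : ∀ j < n, EqOn (fun u => Φ (deriv (polygonalPath x₀ a w n) u)) (fun _ => Φ (w j))
      (Ioo (a j) (a (j + 1))) := fun j hj u hu => by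
    simp only [(hasDerivAt_polygonalPath ha hj hu).deriv]
  rw [← intervalIntegral.sum_integral_adjacent_intervals]
  · refine Finset.sum_congr rfl fun j hj => ?_
    rw [intervalIntegral.integral_congr_Ioo_of_le (ha j.le_succ) (hpiece j (Finset.mem_range.1 hj)),
      intervalIntegral.integral_const, smul_eq_mul]
  · intro j hj
    refine (intervalIntegrable_congr_uIoo (g := fun _ => Φ (w j)) ?_).2 intervalIntegrable_const
    rw [uIoo_of_le (ha j.le_succ)]
    exact hpiece j hj

theorem Convex.polygonalPath_mem {C : Set E} (hC : Convex ℝ C) (ha : Monotone a)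
    (hvertex : ∀ j ≤ n, polygonalPath x₀ a w n (a j) ∈ C) (hu : u ∈ Icc (a 0) (a n)) :
    polygonalPath x₀ a w n u ∈ C := by
  by_cases hu_knot : u ∈ (Finset.range (n + 1)).image a
  · obtain ⟨j, hj, rfl⟩ := Finset.mem_image.1 hu_knot
    exact hvertex j (Nat.lt_succ_iff.1 (Finset.mem_range.1 hj))
  obtain ⟨j, hj, hu⟩ := exists_mem_Ioo_of_mem_Icc_of_notMem hu hu_knot
  have hlen : 0 < a (j + 1) - a j := sub_pos.2 (hu.1.trans hu.2)
  have hseg : polygonalPath x₀ a w n u = polygonalPath x₀ a w n (a j) +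
      ((u - a j) / (a (j + 1) - a j)) •
        (polygonalPath x₀ a w n (a (j + 1)) - polygonalPath x₀ a w n (a j)) := by
    rw [polygonalPath_eq_of_mem_Icc ha hj (Ioo_subset_Icc_self hu),
      polygonalPath_eq_of_mem_Icc (u := a (j + 1)) ha hj ⟨ha j.le_succ, le_rfl⟩,
      add_sub_cancel_left, smul_smul, div_mul_cancel₀ _ hlen.ne']
  rw [hseg]
  exact hC.add_smul_sub_mem (hvertex j hj.le) (hvertex (j + 1) hj)
    ⟨div_nonneg (sub_nonneg.2 hu.1.le) hlen.le, (div_le_one hlen).2 (sub_le_sub_right hu.2.le _)⟩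

end PolygonalPath

section KineticEnergy

variable {N k : ℕ} (m : Fin N → ℝ)

theorem kinSq_smul (c : ℝ) (p : Qs N k) : kinSq m (c • p) = c ^ 2 * kinSq m p := by
  simp only [kinSq, Pi.smul_apply, smul_eq_mul, mul_pow, ← Finset.mul_sum, mul_div_assoc]

theorem kinSq_zero : kinSq m (0 : Qs N k) = 0 := by
  simp [kinSq]

theorem kinSq_neg (p : Qs N k) : kinSq m (-p) = kinSq m p := by
  simp [kinSq]

theorem kinSq_sub_comm (p p' : Qs N k) : kinSq m (p - p') = kinSq m (p' - p) := by
  rw [← neg_sub, kinSq_neg]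

variable {m}

theorem kinSq_pos (hm : ∀ i, 0 < m i) {p : Qs N k} (hp : p ≠ 0) : 0 < kinSq m p := by
  obtain ⟨i, hi⟩ := Function.ne_iff.1 hp
  obtain ⟨l, hl⟩ := Function.ne_iff.1 hi
  have hi_pos : 0 < ∑ l, p i l ^ 2 :=
    Finset.sum_pos' (fun _ _ => sq_nonneg _) ⟨l, Finset.mem_univ l, pow_two_pos_of_ne_zero hl⟩
  exact Finset.sum_pos' (fun j _ => div_nonneg (by positivity) (hm j).le)
    ⟨i, Finset.mem_univ i, div_pos hi_pos (hm i)⟩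

end KineticEnergy

section Excursion

variable {E : Type*} [NormedAddCommGroup E] [NormedSpace ℝ E]

def excursionKnots (t δ s : ℝ) : ℕ → ℝ
  | 0 => 0
  | 1 => δ
  | 2 => 2 * δ
  | 3 => 2 * δ + s
  | 4 => t - 2 * δ
  | 5 => t - δ
  | _ => t

def excursionVelocities (q q' p p' : E) (s : ℝ) : ℕ → E
  | 0 => p
  | 1 => -p
  | 2 => s⁻¹ • (q' - q)
  | 3 => 0
  | 4 => -p'
  | _ => p'

def excursionPath (q q' p p' : E) (t δ s : ℝ) : ℝ → E :=
  polygonalPath q (excursionKnots t δ s) (excursionVelocities q q' p p' s) 6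

theorem exists_excursion_parameters {C : Set E} (hC : IsOpen C) {q q' : E} (hq : q ∈ C)
    (hq' : q' ∈ C) (p p' : E) {K t v : ℝ} (hK : 0 < K) (ht : 0 < t) (hv : K / t ≤ v) (c : ℝ)
    {ε : ℝ} (hε : 0 < ε) :
    ∃ δ s : ℝ, 0 < δ ∧ 0 < s ∧ 4 * δ + s ≤ t ∧ q + δ • p ∈ C ∧ q' - δ • p' ∈ C ∧
      |c * δ + K / s - v| < ε := by
  have hKv : 0 < K / v := div_pos hK ((div_pos hK ht).trans_le hv)
  have hKvt : K / v ≤ t := by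
    rw [div_le_iff₀ ((div_pos hK ht).trans_le hv), mul_comm, ← div_le_iff₀ ht]; exact hv
  set s : ℝ → ℝ := fun δ => min (K / v) (t - 4 * δ)
  have hs_cont : Continuous s := by fun_prop
  have hs0 : s 0 = K / v := by simp [s, hKvt]
  have hlim : Tendsto (fun δ => c * δ + K / s δ) (𝓝 0) (𝓝 v) := by
    have := ((continuous_const_mul c).tendsto 0).add
      (tendsto_const_nhds (x := K).div (hs_cont.tendsto 0) (hs0 ▸ hKv.ne'))
    simpa [hs0, div_div_cancel₀ hK.ne'] using this
  have hs_pos : ∀ᶠ δ in 𝓝 (0 : ℝ), 0 < s δ :=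
    (hs_cont.tendsto 0).eventually (lt_mem_nhds (hs0 ▸ hKv))
  have hp_near : ∀ᶠ δ in 𝓝 (0 : ℝ), q + δ • p ∈ C :=
    ((continuous_const.add (continuous_id.smul continuous_const)).tendsto' 0 q (by simp))
      |>.eventually (hC.mem_nhds hq)
  have hp'_near : ∀ᶠ δ in 𝓝 (0 : ℝ), q' - δ • p' ∈ C :=
    ((continuous_const.sub (continuous_id.smul continuous_const)).tendsto' 0 q' (by simp))
      |>.eventually (hC.mem_nhds hq')
  have henergy : ∀ᶠ δ in 𝓝 (0 : ℝ), |c * δ + K / s δ - v| < ε := by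
    simpa [Real.dist_eq] using Metric.tendsto_nhds.1 hlim ε hε
  obtain ⟨δ, ⟨hs, hp, hp', hE⟩, hδ⟩ :=
    (((hs_pos.and (hp_near.and (hp'_near.and henergy))).filter_mono nhdsWithin_le_nhds).and
      (self_mem_nhdsWithin (s := Ioi 0))).exists
  exact ⟨δ, s δ, hδ, hs, by linarith [min_le_right (K / v) (t - 4 * δ)], hp, hp', hE⟩

variable {q q' p p' : E} {t δ s : ℝ}

theorem monotone_excursionKnots (hδ : 0 ≤ δ) (hs : 0 ≤ s) (hst : 4 * δ + s ≤ t) :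
    Monotone (excursionKnots t δ s) := by
  refine monotone_nat_of_le_succ fun j => ?_
  rcases j with _ | _ | _ | _ | _ | _ | j <;> simp [excursionKnots] <;> linarith

theorem excursionPath_knot_mem {C : Set E} (hδ : 0 ≤ δ) (hs : 0 < s) (hst : 4 * δ + s ≤ t)
    (hq : q ∈ C) (hq' : q' ∈ C) (hp : q + δ • p ∈ C) (hp' : q' - δ • p' ∈ C) :
    ∀ j ≤ 6, excursionPath q q' p p' t δ s (excursionKnots t δ s j) ∈ C := by
  intro j hj
  rw [excursionPath, polygonalPath_knot (monotone_excursionKnots hδ hs.le hst) hj]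
  interval_cases j <;>
    simp [Finset.sum_range_succ, excursionKnots, excursionVelocities, two_mul, smul_smul, hs.ne',
      ← sub_eq_add_neg, ← add_sub_assoc] <;>
    assumption

theorem excursionPath_end (hδ : 0 ≤ δ) (hs : 0 < s) (hst : 4 * δ + s ≤ t) :
    excursionPath q q' p p' t δ s t = q' := by
  have h := polygonalPath_knot (x₀ := q) (w := excursionVelocities q q' p p' s)
    (monotone_excursionKnots hδ hs.le hst) (le_refl 6)
  simpa [Finset.sum_range_succ, excursionKnots, excursionVelocities, two_mul, smul_smul, hs.ne',
    ← sub_eq_add_neg, ← add_sub_assoc, excursionPath] using h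

end Excursion

theorem integral_kinSq_deriv_excursionPath {N k : ℕ} {m : Fin N → ℝ} {q q' p p' : Qs N k}
    {t δ s : ℝ} (hδ : 0 ≤ δ) (hs : 0 < s) (hst : 4 * δ + s ≤ t) :
    ∫ u in (0 : ℝ)..t, kinSq m (deriv (excursionPath q q' p p' t δ s) u) =
      2 * (kinSq m p + kinSq m p') * δ + kinSq m (q' - q) / s := by
  have h := integral_comp_deriv_polygonalPath (x₀ := q) (w := excursionVelocities q q' p p' s)
    (n := 6) (monotone_excursionKnots hδ hs.le hst) (kinSq m)
  simp only [Finset.sum_range_succ, Finset.sum_range_zero, excursionKnots, excursionVelocities,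
    kinSq_neg, kinSq_smul, kinSq_zero] at h
  rw [excursionPath, h]
  field_simp
  ring

theorem exists_piecewise_path_with_prescribed_energy_general
    (N k : ℕ)
    (m : Fin N → ℝ) (hm : ∀ i, 0 < m i)
    (q q' p p' : Qs N k) (hqq' : q ≠ q')
    (t : ℝ) (ht : 0 < t)
    (C : Set (Qs N k)) (hCopen : IsOpen C) (hCconv : Convex ℝ C)
    (hq : q ∈ C) (hq' : q' ∈ C)
    (v : ℝ) (hv : kinSq m (q - q') / t ≤ v) (ε : ℝ) (hε : 0 < ε) :
    ∃ (φ : ℝ → Qs N k) (F : Finset ℝ),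
      ContinuousOn φ (Icc 0 t) ∧
      (∀ u ∈ Icc (0:ℝ) t, φ u ∈ C) ∧
      (∀ u ∈ Icc (0:ℝ) t, u ∉ F → DifferentiableAt ℝ φ u) ∧
      ContinuousOn (deriv φ) (Icc 0 t \ ↑F) ∧
      φ 0 = q ∧ φ t = q' ∧
      HasDerivWithinAt φ p (Ici 0) 0 ∧
      HasDerivWithinAt φ p' (Iic t) t ∧
      |(∫ u in (0:ℝ)..t, kinSq m (deriv φ u)) - v| < ε := by
  obtain ⟨δ, s, hδ, hs, hst, hp, hp', henergy⟩ :=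
    exists_excursion_parameters hCopen hq hq' p p' (kinSq_pos hm (sub_ne_zero.2 hqq'.symm)) ht
      (kinSq_sub_comm m q q' ▸ hv) (2 * (kinSq m p + kinSq m p')) hε
  have ha := monotone_excursionKnots hδ.le hs.le hst
  refine ⟨excursionPath q q' p p' t δ s, (Finset.range (6 + 1)).image (excursionKnots t δ s),
    continuous_polygonalPath.continuousOn,
    fun u hu => hCconv.polygonalPath_mem ha (excursionPath_knot_mem hδ.le hs hst hq hq' hp hp') hu,
    fun u hu hF => differentiableAt_polygonalPath ha hu hF,
    fun u hu => (continuousAt_deriv_polygonalPath ha hu.1 hu.2).continuousWithinAt,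
    polygonalPath_knot_zero ha, excursionPath_end hδ.le hs hst,
    hasDerivWithinAt_polygonalPath_Ici ha (j := 0) (by norm_num) hδ,
    hasDerivWithinAt_polygonalPath_Iic ha (j := 5) (by norm_num) (sub_lt_self t hδ), ?_⟩
  rwa [integral_kinSq_deriv_excursionPath hδ.le hs hst]

/-- reachability construction: for any `v ≥ ‖q−q'‖_m²/t` and `ε > 0` there
is a continuous, piecewise `C¹` path in the convex open set `C` from `q` to `q'` on `[0,t]`,
with prescribed one-sided derivatives `p` at `0` and `p'` at `t`, whose energy
`∫₀^t ‖φ'(u)‖_m² du` is within `ε` of `v`. -/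
theorem exists_piecewise_path_with_prescribed_energy
    (N k : ℕ) (hN : 1 ≤ N) (hk : 1 ≤ k)
    (m : Fin N → ℝ) (hm : ∀ i, 0 < m i)
    (q q' p p' : Qs N k) (hqq' : q ≠ q')
    (t : ℝ) (ht : 0 < t)
    (C : Set (Qs N k)) (hCopen : IsOpen C) (hCconv : Convex ℝ C)
    (hq : q ∈ C) (hq' : q' ∈ C)
    (v : ℝ) (hv : kinSq m (q - q') / t ≤ v) (ε : ℝ) (hε : 0 < ε) :
    ∃ (φ : ℝ → Qs N k) (F : Finset ℝ),
      ContinuousOn φ (Icc 0 t) ∧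
      (∀ u ∈ Icc (0:ℝ) t, φ u ∈ C) ∧
      (∀ u ∈ Icc (0:ℝ) t, u ∉ F → DifferentiableAt ℝ φ u) ∧
      ContinuousOn (deriv φ) (Icc 0 t \ ↑F) ∧
      φ 0 = q ∧ φ t = q' ∧
      HasDerivWithinAt φ p (Ici 0) 0 ∧
      HasDerivWithinAt φ p' (Iic t) t ∧
      |(∫ u in (0:ℝ)..t, kinSq m (deriv φ u)) - v| < ε :=
  exists_piecewise_path_with_prescribed_energy_general N k m hm q q' p p' hqq' t ht C hCopen hCconv
    hq hq' v hv ε hε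
end
end

section
/- Identify 𝒳 ⊆ ℝ^{2kN+1} with coordinates (q,p,ξ) and define the drift vector field b₀ : 𝒳 → ℝ^{2kN+1} by b₀(q,p,ξ) = ( (pᵢ/mᵢ)ᵢ , ( −(ξ + γ/mᵢ)pᵢ − ∇_{qᵢ}U(q) )ᵢ , a⁻¹(‖p‖_m² − kN/β) ). For the constant vector fields Eᵢ^ℓ equal to the standard basis vector in the pᵢ^ℓ direction, define the Lie bracket of smooth vector fields X, Y by [X,Y](x) = DY(x)·X(x) − DX(x)·Y(x), where D denotes the Fréchet derivative. Then for each i, ℓ and each x = (q,p,ξ) ∈ 𝒳: (i) [Eᵢ^ℓ, b₀](x) is the vector whose qᵢ^ℓ-component is 1/mᵢ, whose pᵢ^ℓ-component is −(ξ + γ/mᵢ), whose ξ-component is 2pᵢ^ℓ/(a·mᵢ), and whose other components vanish; (ii) [Eᵢ^ℓ, [Eᵢ^ℓ, b₀]](x) is the vector with ξ-component 2/(a·mᵢ) and all other components zero; and (iii) the collection of vectors { Eᵢ^ℓ, [Eᵢ^ℓ, b₀](x), [Eᵢ^ℓ, [Eᵢ^ℓ, b₀]](x) : 1 ≤ i ≤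 N, 1 ≤ ℓ ≤ k } spans all of ℝ^{2kN+1}. -/
open scoped BigOperators ENNReal Topology
open MeasureTheory Filter Set

noncomputable section

/-- Lie bracket `[X,Y](x) = DY(x)·X(x) − DX(x)·Y(x)` of vector fields on the state space. -/
def lieB {N k : ℕ} (Xf Yf : Xs N k → Xs N k) (x : Xs N k) : Xs N k :=
  fderiv ℝ Yf x (Xf x) - fderiv ℝ Xf x (Yf x)

/-- The drift vector field `b₀` of the Nosé–Hoover equation under Brownian heating. -/
def b0 {N k : ℕ} (m : Fin N → ℝ) (γ a β : ℝ) (U : Qs N k → ℝ) (x : Xs N k) : Xs N k :=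
  (fun i l => x.2.1 i l / m i,
   fun i l => -(x.2.2 + γ / m i) * x.2.1 i l - gradU U x.1 i l,
   a⁻¹ * (kinSq m x.2.1 - (k * N : ℝ) / β))

namespace NH

variable {N k : ℕ}

def Pq (N k : ℕ) : Xs N k →L[ℝ] Qs N k := ContinuousLinearMap.fst ℝ (Qs N k) (Qs N k × ℝ)

def Pxi (N k : ℕ) : Xs N k →L[ℝ] ℝ :=
  (ContinuousLinearMap.snd ℝ (Qs N k) ℝ).comp (ContinuousLinearMap.snd ℝ (Qs N k) (Qs N k × ℝ))

def Ppc (N k : ℕ) (i : Fin N) (l : Fin k) : Xs N k →L[ℝ] ℝ :=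
  (ContinuousLinearMap.proj l).comp ((ContinuousLinearMap.proj i).comp
    ((ContinuousLinearMap.fst ℝ (Qs N k) ℝ).comp (ContinuousLinearMap.snd ℝ (Qs N k) (Qs N k × ℝ))))

@[simp] lemma Pq_apply (v : Xs N k) : Pq N k v = v.1 := rfl
@[simp] lemma Pxi_apply (v : Xs N k) : Pxi N k v = v.2.2 := rfl
@[simp] lemma Ppc_apply (i : Fin N) (l : Fin k) (v : Xs N k) : Ppc N k i l v = v.2.1 i l := rfl

lemma gradU_diff {O : Set (Qs N k)} (hOopen : IsOpen O) {U : Qs N k → ℝ}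
    (hU : ContDiffOn ℝ (⊤ : ℕ∞) U O) {q : Qs N k} (hq : q ∈ O) (i : Fin N) (l : Fin k) :
    DifferentiableAt ℝ (fun q' => gradU U q' i l) q := by
  have h1 : ContDiffAt ℝ (⊤ : ℕ∞) U q := hU.contDiffAt (hOopen.mem_nhds hq)
  have h2 : ContDiffAt ℝ 1 (fderiv ℝ U) q := h1.fderiv_right (WithTop.coe_le_coe.2 le_top)
  have h3 : DifferentiableAt ℝ (fderiv ℝ U) q := h2.differentiableAt one_ne_zero
  exact h3.clm_apply (differentiableAt_const _)

lemma hasFDerivAt_b0 (m : Fin N → ℝ) (γ a β : ℝ) {O : Set (Qs N k)} (hOopen : IsOpen O)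
    {U : Qs N k → ℝ} (hU : ContDiffOn ℝ (⊤ : ℕ∞) U O) {x0 : Xs N k} (hx : x0.1 ∈ O) :
    HasFDerivAt (b0 m γ a β U)
      ((ContinuousLinearMap.pi fun i' : Fin N => ContinuousLinearMap.pi fun l' : Fin k =>
          (m i')⁻¹ • Ppc N k i' l').prod
        ((ContinuousLinearMap.pi fun i' : Fin N => ContinuousLinearMap.pi fun l' : Fin k =>
            ((-(x0.2.2 + γ / m i')) • Ppc N k i' l' + x0.2.1 i' l' • (-(Pxi N k))
              - (fderiv ℝ (fun q => gradU U q i' l') x0.1).comp (Pq N k))).prod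
          (a⁻¹ • ∑ i' : Fin N, (m i')⁻¹ •
            ∑ l' : Fin k, (x0.2.1 i' l' • Ppc N k i' l' + x0.2.1 i' l' • Ppc N k i' l')))) x0 := by
  have hc1 : ∀ (i' : Fin N) (l' : Fin k),
      HasFDerivAt (fun x : Xs N k => x.2.1 i' l' / m i') ((m i')⁻¹ • Ppc N k i' l') x0 := by
    intro i' l'
    simpa [div_eq_inv_mul] using ((Ppc N k i' l').hasFDerivAt.const_mul (m i')⁻¹)
  have hT1 : HasFDerivAt (fun x : Xs N k => (fun i' l' => x.2.1 i' l' / m i'))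
      (ContinuousLinearMap.pi fun i' : Fin N => ContinuousLinearMap.pi fun l' : Fin k =>
        (m i')⁻¹ • Ppc N k i' l') x0 :=
    hasFDerivAt_pi.2 fun i' => hasFDerivAt_pi.2 fun l' => hc1 i' l'
  have hc2 : ∀ (i' : Fin N) (l' : Fin k),
      HasFDerivAt (fun x : Xs N k => -(x.2.2 + γ / m i') * x.2.1 i' l' - gradU U x.1 i' l')
        ((-(x0.2.2 + γ / m i')) • Ppc N k i' l' + x0.2.1 i' l' • (-(Pxi N k))
          - (fderiv ℝ (fun q => gradU U q i' l') x0.1).comp (Pq N k)) x0 := by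
    intro i' l'
    have h1 : HasFDerivAt (fun x : Xs N k => -(x.2.2 + γ / m i')) (-(Pxi N k)) x0 :=
      ((Pxi N k).hasFDerivAt.add_const (γ / m i')).neg
    have h2 : HasFDerivAt (fun x : Xs N k => x.2.1 i' l') (Ppc N k i' l') x0 :=
      (Ppc N k i' l').hasFDerivAt
    have hg : HasFDerivAt (fun x : Xs N k => gradU U x.1 i' l')
        ((fderiv ℝ (fun q => gradU U q i' l') x0.1).comp (Pq N k)) x0 :=
      ((gradU_diff hOopen hU hx i' l').hasFDerivAt).comp x0 hasFDerivAt_fst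
    exact (h1.mul h2).sub hg
  have hT2 := hasFDerivAt_pi.2 fun i' : Fin N => hasFDerivAt_pi.2 fun l' : Fin k => hc2 i' l'
  have hsq : ∀ (i' : Fin N) (l' : Fin k), HasFDerivAt (fun x : Xs N k => x.2.1 i' l' ^ 2)
      (x0.2.1 i' l' • Ppc N k i' l' + x0.2.1 i' l' • Ppc N k i' l') x0 := by
    intro i' l'
    simpa [pow_two] using ((Ppc N k i' l').hasFDerivAt.fun_mul ((Ppc N k i' l').hasFDerivAt))
  have hdiv : ∀ i' : Fin N, HasFDerivAt (fun x : Xs N k => (∑ l', x.2.1 i' l' ^ 2) / m i')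
      ((m i')⁻¹ • ∑ l' : Fin k, (x0.2.1 i' l' • Ppc N k i' l' + x0.2.1 i' l' • Ppc N k i' l'))
      x0 := by
    intro i'
    have := (HasFDerivAt.sum (fun l' (_ : l' ∈ Finset.univ) => hsq i' l')).const_mul (m i')⁻¹
    simpa [div_eq_inv_mul] using this
  have hkin : HasFDerivAt (fun x : Xs N k => kinSq m x.2.1)
      (∑ i' : Fin N, (m i')⁻¹ •
        ∑ l' : Fin k, (x0.2.1 i' l' • Ppc N k i' l' + x0.2.1 i' l' • Ppc N k i' l')) x0 :=
    HasFDerivAt.fun_sum fun i' (_ : i' ∈ Finset.univ) => hdiv i'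
  have h3 := (hkin.sub_const ((k * N : ℝ) / β)).const_mul a⁻¹
  exact hT1.prodMk (hT2.prodMk h3)

end NH

namespace NH
lemma bracket1 (m : Fin N → ℝ) (γ a β : ℝ) {O : Set (Qs N k)} (hOopen : IsOpen O)
    {U : Qs N k → ℝ} (hU : ContDiffOn ℝ (⊤ : ℕ∞) U O) {x0 : Xs N k} (hx : x0.1 ∈ O)
    (i : Fin N) (l : Fin k) :
    lieB (fun _ => eP N k i l) (b0 m γ a β U) x0
      = (Pi.single i (Pi.single l (1 / m i)),
         Pi.single i (Pi.single l (-(x0.2.2 + γ / m i))),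
         2 * x0.2.1 i l / (a * m i)) := by
  have hb := hasFDerivAt_b0 m γ a β hOopen hU hx
  have hfd := hb.fderiv
  simp only [lieB, fderiv_fun_const, Pi.zero_apply, ContinuousLinearMap.zero_apply, sub_zero, hfd]
  refine Prod.ext ?_ (Prod.ext ?_ ?_)
  · funext i' l'
    simp only [ContinuousLinearMap.prod_apply, ContinuousLinearMap.pi_apply,
      ContinuousLinearMap.smul_apply, Ppc_apply, eP, Pi.single_apply, smul_eq_mul]
    by_cases hi : i' = i
    · subst hi
      by_cases hl : l' = l <;> simp [hl, Pi.single_apply, div_eq_inv_mul]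
    · simp [hi, Pi.single_apply]
  · funext i' l'
    simp only [ContinuousLinearMap.prod_apply, ContinuousLinearMap.pi_apply,
      ContinuousLinearMap.sub_apply, ContinuousLinearMap.add_apply,
      ContinuousLinearMap.smul_apply, ContinuousLinearMap.comp_apply, Ppc_apply, Pxi_apply,
      Pq_apply, ContinuousLinearMap.neg_apply, eP, map_zero, smul_eq_mul]
    by_cases hi : i' = i
    · subst hi
      by_cases hl : l' = l <;> simp [hl, Pi.single_apply]
    · simp [hi, Pi.single_apply]
  · simp only [ContinuousLinearMap.prod_apply, ContinuousLinearMap.smul_apply,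
      ContinuousLinearMap.sum_apply, ContinuousLinearMap.add_apply,
      ContinuousLinearMap.smul_apply, Ppc_apply, eP, smul_eq_mul]
    rw [Finset.sum_eq_single i]
    · rw [Finset.sum_eq_single l]
      · simp only [Pi.single_eq_same]
        rw [div_eq_mul_inv, mul_inv]
        ring
      · intro b _ hb
        simp [Pi.single_apply, hb]
      · intro h
        exact absurd (Finset.mem_univ l) h
    · intro b _ hb
      simp [Pi.single_apply, hb]
    · intro h
      exact absurd (Finset.mem_univ i) h
end NH

namespace NH
lemma bracket2 (m : Fin N → ℝ) (γ a β : ℝ) {O : Set (Qs N k)} (hOopen : IsOpen O)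
    {U : Qs N k → ℝ} (hU : ContDiffOn ℝ (⊤ : ℕ∞) U O) {x0 : Xs N k} (hx : x0.1 ∈ O)
    (i : Fin N) (l : Fin k) :
    lieB (fun _ => eP N k i l) (lieB (fun _ => eP N k i l) (b0 m γ a β U)) x0
      = (0, 0, 2 / (a * m i)) := by
  set E : Qs N k := Pi.single i (Pi.single l (1 : ℝ)) with hE
  have hsingle : ∀ c : ℝ, (Pi.single i (Pi.single l c) : Qs N k) = c • E := by
    intro c
    funext i' l'
    by_cases hi : i' = i
    · subst hi
      by_cases hl : l' = l <;> simp [hE, Pi.single_apply, hl]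
    · simp [hE, Pi.single_apply, hi]
  -- the explicit form of the first bracket, as a function
  set V : Xs N k → Xs N k := fun y =>
    (Pi.single i (Pi.single l (1 / m i)),
     Pi.single i (Pi.single l (-(y.2.2 + γ / m i))),
     2 * y.2.1 i l / (a * m i)) with hV
  have heq : (fun y => lieB (fun _ => eP N k i l) (b0 m γ a β U) y) =ᶠ[nhds x0] V := by
    have hmem : {y : Xs N k | y.1 ∈ O} ∈ nhds x0 :=
      (hOopen.preimage continuous_fst).mem_nhds hx
    filter_upwards [hmem] with y hy
    exact bracket1 m γ a β hOopen hU hy i l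
  have hVd : HasFDerivAt V
      ((0 : Xs N k →L[ℝ] Qs N k).prod
        (((-(Pxi N k)).smulRight E).prod ((2 / (a * m i)) • Ppc N k i l))) x0 := by
    have h1 : HasFDerivAt (fun _ : Xs N k => (Pi.single i (Pi.single l (1 / m i)) : Qs N k))
        (0 : Xs N k →L[ℝ] Qs N k) x0 := hasFDerivAt_const _ _
    have h2 : HasFDerivAt (fun y : Xs N k => (Pi.single i (Pi.single l (-(y.2.2 + γ / m i))) : Qs N k))
        ((-(Pxi N k)).smulRight E) x0 := by
      have hb : HasFDerivAt (fun y : Xs N k => -(y.2.2 + γ / m i)) (-(Pxi N k)) x0 :=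
        ((Pxi N k).hasFDerivAt.add_const (γ / m i)).neg
      have := hb.smul_const E
      simpa only [← hsingle] using this
    have h3 : HasFDerivAt (fun y : Xs N k => 2 * y.2.1 i l / (a * m i))
        ((2 / (a * m i)) • Ppc N k i l) x0 := by
      have := HasFDerivAt.const_mul (x := x0) (Ppc N k i l).hasFDerivAt (2 / (a * m i))
      have heq3 : (fun y : Xs N k => 2 / (a * m i) * (Ppc N k i l) y)
          = fun y : Xs N k => 2 * y.2.1 i l / (a * m i) := by
        funext y
        rw [Ppc_apply]
        ring
      rw [heq3] at this
      exact this
    exact h1.prodMk (h2.prodMk h3)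
  have hfd : fderiv ℝ (fun y => lieB (fun _ => eP N k i l) (b0 m γ a β U) y) x0
      = ((0 : Xs N k →L[ℝ] Qs N k).prod
        (((-(Pxi N k)).smulRight E).prod ((2 / (a * m i)) • Ppc N k i l))) := by
    rw [heq.fderiv_eq, hVd.fderiv]
  simp only [lieB, fderiv_const, Pi.zero_apply, ContinuousLinearMap.zero_apply, sub_zero]
  rw [hfd]
  refine Prod.ext ?_ (Prod.ext ?_ ?_)
  · simp [eP]
  · simp [eP, ContinuousLinearMap.smulRight_apply]
  · simp [eP, Pi.single_eq_same]
end NH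

namespace NH
lemma sum_single (f : Qs N k) :
    ∑ i, ∑ l, f i l • (Pi.single i (Pi.single l (1 : ℝ)) : Qs N k) = f := by
  funext i' l'
  simp only [Finset.sum_apply, Pi.smul_apply, smul_eq_mul]
  rw [Finset.sum_eq_single i']
  · rw [Finset.sum_eq_single l']
    · simp
    · intro b _ hb
      simp [Pi.single_apply, hb]
    · intro h
      exact absurd (Finset.mem_univ l') h
  · intro b _ hb
    simp [Pi.single_apply, hb]
  · intro h
    exact absurd (Finset.mem_univ i') h
end NH


/-- verification of Hörmander's bracket condition for the Nosé–Hoover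
drift: the explicit first and second brackets with the constant momentum fields, and the
fact that these vectors span `ℝ^{2kN+1}` at every point of `𝒳`. -/
theorem hormander_brackets
    (N k : ℕ) (hN : 1 ≤ N) (hk : 1 ≤ k)
    (m : Fin N → ℝ) (hm : ∀ i, 0 < m i)
    (γ a β : ℝ) (hγ : 0 < γ) (ha : 0 < a) (hβ : 0 < β)
    (O : Set (Qs N k)) (hOne : O.Nonempty) (hOopen : IsOpen O)
    (U : Qs N k → ℝ) (hUnonneg : ∀ q ∈ O, 0 ≤ U q) (hU : ContDiffOn ℝ (⊤ : ℕ∞) U O) :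
    ∀ x ∈ {x : Xs N k | x.1 ∈ O},
      (∀ (i : Fin N) (l : Fin k),
        lieB (fun _ => eP N k i l) (b0 m γ a β U) x
          = (Pi.single i (Pi.single l (1 / m i)),
             Pi.single i (Pi.single l (-(x.2.2 + γ / m i))),
             2 * x.2.1 i l / (a * m i))) ∧
      (∀ (i : Fin N) (l : Fin k),
        lieB (fun _ => eP N k i l)
            (lieB (fun _ => eP N k i l) (b0 m γ a β U)) x
          = (0, 0, 2 / (a * m i))) ∧
      Submodule.span ℝ
          {v : Xs N k | ∃ (i : Fin N) (l : Fin k),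
            v = eP N k i l ∨
            v = lieB (fun _ => eP N k i l) (b0 m γ a β U) x ∨
            v = lieB (fun _ => eP N k i l)
                  (lieB (fun _ => eP N k i l) (b0 m γ a β U)) x}
        = ⊤ := by
  intro x hx
  have hx' : x.1 ∈ O := hx
  refine ⟨fun i l => NH.bracket1 m γ a β hOopen hU hx' i l,
          fun i l => NH.bracket2 m γ a β hOopen hU hx' i l, ?_⟩
  set S : Set (Xs N k) :=
    {v : Xs N k | ∃ (i : Fin N) (l : Fin k),
      v = eP N k i l ∨
      v = lieB (fun _ => eP N k i l) (b0 m γ a β U) x ∨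
      v = lieB (fun _ => eP N k i l)
            (lieB (fun _ => eP N k i l) (b0 m γ a β U)) x} with hS
  have heP : ∀ (i : Fin N) (l : Fin k), eP N k i l ∈ Submodule.span ℝ S := fun i l =>
    Submodule.subset_span ⟨i, l, Or.inl rfl⟩
  set i0 : Fin N := ⟨0, hN⟩
  set l0 : Fin k := ⟨0, hk⟩
  have hXi1 : ((0, 0, 1) : Xs N k) ∈ Submodule.span ℝ S := by
    have h2 : ((0, 0, 2 / (a * m i0)) : Xs N k) ∈ Submodule.span ℝ S :=
      Submodule.subset_span
        ⟨i0, l0, Or.inr (Or.inr (NH.bracket2 m γ a β hOopen hU hx' i0 l0).symm)⟩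
    have hs := Submodule.smul_mem _ ((a * m i0) / 2) h2
    have hne : a * m i0 ≠ 0 := mul_ne_zero ha.ne' (hm i0).ne'
    have heq : ((a * m i0) / 2) • ((0, 0, 2 / (a * m i0)) : Xs N k) = ((0, 0, 1) : Xs N k) := by
      refine Prod.ext (by simp) (Prod.ext (by simp) ?_)
      show ((a * m i0) / 2) • (2 / (a * m i0)) = 1
      rw [smul_eq_mul]
      field_simp [(hm i0).ne']
    rwa [heq] at hs
  have heQ : ∀ (i : Fin N) (l : Fin k), eQ N k i l ∈ Submodule.span ℝ S := by
    intro i l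
    have hb1 : ((Pi.single i (Pi.single l (1 / m i)),
        Pi.single i (Pi.single l (-(x.2.2 + γ / m i))),
        2 * x.2.1 i l / (a * m i)) : Xs N k) ∈ Submodule.span ℝ S :=
      Submodule.subset_span
        ⟨i, l, Or.inr (Or.inl (NH.bracket1 m γ a β hOopen hU hx' i l).symm)⟩
    have hcomb := Submodule.smul_mem _ (m i)
      (Submodule.add_mem _
        (Submodule.add_mem _ hb1 (Submodule.smul_mem _ (x.2.2 + γ / m i) (heP i l)))
        (Submodule.smul_mem _ (-(2 * x.2.1 i l / (a * m i))) hXi1))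
    have hmne : m i ≠ 0 := (hm i).ne'
    have heq : (m i) • (((Pi.single i (Pi.single l (1 / m i)),
        Pi.single i (Pi.single l (-(x.2.2 + γ / m i))),
        2 * x.2.1 i l / (a * m i)) : Xs N k)
        + (x.2.2 + γ / m i) • eP N k i l
        + (-(2 * x.2.1 i l / (a * m i))) • ((0, 0, 1) : Xs N k)) = eQ N k i l := by
      refine Prod.ext ?_ (Prod.ext ?_ ?_)
      · show (m i) • ((Pi.single i (Pi.single l (1 / m i)) : Qs N k)
            + (x.2.2 + γ / m i) • (0 : Qs N k) + (-(2 * x.2.1 i l / (a * m i))) • (0 : Qs N k))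
          = (eQ N k i l).1
      
        funext i' l'
        by_cases hi : i' = i
        · subst hi
          by_cases hl : l' = l
          · subst hl
            simp [eQ, Pi.single_eq_same, hmne]
          · simp [eQ, Pi.single_apply, hl]
        · simp [eQ, Pi.single_apply, hi]
      · show (m i) • ((Pi.single i (Pi.single l (-(x.2.2 + γ / m i))) : Qs N k)
            + (x.2.2 + γ / m i) • (Pi.single i (Pi.single l (1 : ℝ)) : Qs N k)
            + (-(2 * x.2.1 i l / (a * m i))) • (0 : Qs N k)) = (eQ N k i l).2.1
        funext i' l'
        by_cases hi : i' = i
        · subst hi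
          by_cases hl : l' = l
          · subst hl
            simp only [eQ, Pi.add_apply, Pi.smul_apply, Pi.single_eq_same, Pi.zero_apply,
              smul_eq_mul, smul_zero, add_zero, Prod.snd]
            ring
          · simp [eQ, Pi.single_apply, hl]
        · simp [eQ, Pi.single_apply, hi]
      · show (m i) • ((2 * x.2.1 i l / (a * m i)) + (x.2.2 + γ / m i) • (0 : ℝ)
            + (-(2 * x.2.1 i l / (a * m i))) • (1 : ℝ)) = (eQ N k i l).2.2
        simp [eQ, smul_eq_mul]
    rw [← heq]
    exact hcomb
  rw [Submodule.eq_top_iff']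
  intro v
  have hdec : v = (∑ i, ∑ l, v.1 i l • eQ N k i l)
      + ((∑ i, ∑ l, v.2.1 i l • eP N k i l) + v.2.2 • ((0, 0, 1) : Xs N k)) := by
    refine Prod.ext ?_ (Prod.ext ?_ ?_)
    · simp [Prod.fst_sum, Prod.snd_sum, eQ, eP, NH.sum_single]
    · simp [Prod.fst_sum, Prod.snd_sum, eQ, eP, NH.sum_single]
    · simp [Prod.fst_sum, Prod.snd_sum, eQ, eP]
  rw [hdec]
  refine Submodule.add_mem _ ?_ (Submodule.add_mem _ ?_ (Submodule.smul_mem _ _ hXi1))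
  · exact Submodule.sum_mem _ fun i _ => Submodule.sum_mem _ fun l _ =>
      Submodule.smul_mem _ _ (heQ i l)
  · exact Submodule.sum_mem _ fun i _ => Submodule.sum_mem _ fun l _ =>
      Submodule.smul_mem _ _ (heP i l)
end
end
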